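/- Let N ≥ 1 be an integer, σ ∈ (0,2), and let g : ℝ^N → ℝ be a bounded measurable function. Then there exists a constant C > 0, depending only on N and σ, such that for every x ∈ ℝ^N, every R > 0 and every y > 0, the integral ∫_{{ξ : |ξ−x| ≥ R}} (g(ξ) − g(x)) (K_y(x,ξ) − K_0(x,ξ)) dξ is absolutely convergent and its absolute value is at most C · (sup |g|) · y² / R^{σ+2}. -/

import Mathlib

/-!
By the mean value theorem for `t ↦ t ^ (-(N + σ) / 2)` on `[r², r² + y²]`, the two kernels at
distance `r` differ by at most `(N + σ) / 2 · y² · r ^ (-(N + σ + 2))`. Since `σ > 0` this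
majorant is integrable on `{|ξ - x| ≥ R}`, and in polar coordinates its integral there is
`N |B₁| R ^ (-(σ + 2)) / (σ + 2)`.
-/

open MeasureTheory Set Metric

lemma abs_rpow_neg_sub_rpow_neg_le {a b q : ℝ} (ha : 0 < a) (hab : a ≤ b) (hq : 0 ≤ q) :
    |b ^ (-q) - a ^ (-q)| ≤ q * a ^ (-q - 1) * (b - a) := by
  have hderiv : ∀ t ∈ Icc a b, HasDerivWithinAt (fun t : ℝ ↦ t ^ (-q))
      (-q * t ^ (-q - 1)) (Icc a b) t := fun t ht ↦
    (Real.hasDerivAt_rpow_const (Or.inl (ha.trans_le ht.1).ne')).hasDerivWithinAt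
  have hbound : ∀ t ∈ Ico a b, ‖-q * t ^ (-q - 1)‖ ≤ q * a ^ (-q - 1) := fun t ht ↦ by
    rw [norm_mul, norm_neg, Real.norm_of_nonneg hq,
      Real.norm_of_nonneg (Real.rpow_nonneg (ha.le.trans ht.1) _)]
    exact mul_le_mul_of_nonneg_left (Real.rpow_le_rpow_of_nonpos ha ht.1 (by linarith)) hq
  simpa using norm_image_sub_le_of_norm_deriv_le_segment' hderiv hbound b (right_mem_Icc.2 hab)

lemma abs_rpow_sq_add_sq_sub_rpow_le {p r : ℝ} (y : ℝ) (hp : 0 ≤ p) (hr : 0 < r) :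
    |(r ^ 2 + y ^ 2) ^ (-p / 2) - r ^ (-p)| ≤ p / 2 * y ^ 2 * r ^ (-(p + 2)) := by
  have hsq : ∀ e : ℝ, (r ^ 2) ^ e = r ^ (2 * e) := fun e ↦ by
    rw [← Real.rpow_natCast r 2, ← Real.rpow_mul hr.le]; norm_num
  have key := abs_rpow_neg_sub_rpow_neg_le (q := p / 2) (pow_pos hr 2)
    (le_add_of_nonneg_right (sq_nonneg y)) (by positivity)
  rw [hsq, hsq, add_sub_cancel_left] at key
  convert key using 1 <;> ring_nf

section Tail

variable {E : Type*} [NormedAddCommGroup E]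

lemma indicator_le_dist_norm_sub_rpow (x : E) (R s : ℝ) :
    {ξ : E | R ≤ dist ξ x}.indicator (fun ξ ↦ ‖ξ - x‖ ^ s)
      = fun ξ ↦ (Ici R).indicator (· ^ s) ‖ξ - x‖ := by
  ext ξ
  simp [indicator_apply, dist_eq_norm]

variable [MeasurableSpace E] [BorelSpace E]

lemma measurableSet_le_dist (x : E) (R : ℝ) : MeasurableSet {ξ : E | R ≤ dist ξ x} :=
  (isClosed_le continuous_const (continuous_id.dist continuous_const)).measurableSet

variable [NormedSpace ℝ E] [FiniteDimensional ℝ E] [Nontrivial E] (μ : Measure E)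
  [μ.IsAddHaarMeasure]

local notation "dim" => Module.finrank ℝ

lemma pow_smul_indicator_Ici_rpow {n : ℕ} (hn : 1 ≤ n) {R : ℝ} (hR : 0 < R) (s : ℝ) :
    (fun r : ℝ ↦ r ^ (n - 1) • (Ici R).indicator (· ^ s) r)
      = (Ici R).indicator (· ^ ((n : ℝ) - 1 + s)) := by
  ext r
  by_cases hr : r ∈ Ici R
  · simp only [indicator_of_mem hr, smul_eq_mul]
    rw [← Real.rpow_natCast, ← Real.rpow_add (hR.trans_le hr), Nat.cast_sub hn, Nat.cast_one]
  · simp [indicator_of_notMem hr]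

lemma integrableOn_norm_sub_rpow_of_le_dist (x : E) {R s : ℝ} (hR : 0 < R)
    (hs : (dim E : ℝ) + s < 0) :
    IntegrableOn (fun ξ ↦ ‖ξ - x‖ ^ s) {ξ | R ≤ dist ξ x} μ := by
  rw [← integrable_indicator_iff (measurableSet_le_dist x R),
    indicator_le_dist_norm_sub_rpow]
  refine ((integrable_fun_norm_addHaar μ).2 ?_).comp_sub_right x
  rw [pow_smul_indicator_Ici_rpow Module.finrank_pos hR]
  exact (integrable_indicator_iff measurableSet_Ici).2
    ((integrableOn_Ici_iff_integrableOn_Ioi).2 (integrableOn_Ioi_rpow_of_lt (by linarith) hR))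
    |>.integrableOn

lemma setIntegral_norm_sub_rpow_of_le_dist (x : E) {R s : ℝ} (hR : 0 < R)
    (hs : (dim E : ℝ) + s < 0) :
    ∫ ξ in {ξ | R ≤ dist ξ x}, ‖ξ - x‖ ^ s ∂μ
      = dim E * μ.real (ball 0 1) * (R ^ ((dim E : ℝ) + s) / -((dim E : ℝ) + s)) := by
  have hIci : Ioi (0 : ℝ) ∩ Ici R = Ici R := inter_eq_self_of_subset_right fun r hr ↦ hR.trans_le hr
  have hexp : (dim E : ℝ) - 1 + s + 1 = dim E + s := by ring
  rw [← integral_indicator (measurableSet_le_dist x R), indicator_le_dist_norm_sub_rpow,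
    integral_sub_right_eq_self (fun ξ ↦ (Ici R).indicator (· ^ s) ‖ξ‖) x,
    integral_fun_norm_addHaar, pow_smul_indicator_Ici_rpow Module.finrank_pos hR,
    setIntegral_indicator measurableSet_Ici, hIci, integral_Ici_eq_integral_Ioi,
    integral_Ioi_rpow_of_lt (by linarith) hR, nsmul_eq_mul, smul_eq_mul,
    hexp, div_neg, neg_div]
  ring

lemma integrableOn_and_abs_setIntegral_le_of_abs_le_norm_sub_rpow (x : E) {f : E → ℝ}
    (hf : AEStronglyMeasurable f μ) {R s c : ℝ} (hR : 0 < R) (hs : (dim E : ℝ) + s < 0)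
    (hbound : ∀ ξ, R ≤ dist ξ x → |f ξ| ≤ c * ‖ξ - x‖ ^ s) :
    IntegrableOn f {ξ | R ≤ dist ξ x} μ ∧
      |∫ ξ in {ξ | R ≤ dist ξ x}, f ξ ∂μ|
        ≤ c * (dim E * μ.real (ball 0 1) * (R ^ ((dim E : ℝ) + s) / -((dim E : ℝ) + s))) := by
  have hdom := (integrableOn_norm_sub_rpow_of_le_dist μ x hR hs).const_mul c
  have hbound_ae : ∀ᵐ ξ ∂μ.restrict {ξ | R ≤ dist ξ x}, ‖f ξ‖ ≤ c * ‖ξ - x‖ ^ s :=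
    (ae_restrict_iff' (measurableSet_le_dist x R)).2 (ae_of_all _ hbound)
  refine ⟨hdom.mono' hf.restrict hbound_ae, ?_⟩
  calc |∫ ξ in {ξ | R ≤ dist ξ x}, f ξ ∂μ|
      ≤ ∫ ξ in {ξ | R ≤ dist ξ x}, c * ‖ξ - x‖ ^ s ∂μ := norm_integral_le_of_norm_le hdom hbound_ae
    _ = _ := by rw [integral_const_mul, setIntegral_norm_sub_rpow_of_le_dist μ x hR hs]

end Tail

lemma abs_sub_mul_kernel_sub_le {a b M p t : ℝ} (y : ℝ) (ha : |a| ≤ M) (hb : |b| ≤ M)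
    (hp : 0 ≤ p) (ht : 0 < t) :
    |(a - b) * ((t ^ 2 + y ^ 2) ^ (-p / 2) - t ^ (-p))| ≤ M * p * y ^ 2 * t ^ (-(p + 2)) := by
  have hab : |a - b| ≤ 2 * M := (abs_sub a b).trans (by linarith)
  rw [abs_mul]
  calc |a - b| * |(t ^ 2 + y ^ 2) ^ (-p / 2) - t ^ (-p)|
      ≤ 2 * M * (p / 2 * y ^ 2 * t ^ (-(p + 2))) :=
        mul_le_mul hab (abs_rpow_sq_add_sq_sub_rpow_le y hp ht) (abs_nonneg _)
          (by linarith [abs_nonneg a])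
    _ = M * p * y ^ 2 * t ^ (-(p + 2)) := by ring

theorem stmt1 (N : ℕ) (hN : 1 ≤ N) (σ : ℝ) (hσ : σ ∈ Set.Ioo (0:ℝ) 2) :
    ∃ C > 0, ∀ (g : EuclideanSpace ℝ (Fin N) → ℝ), Measurable g →
      ∀ M : ℝ, (∀ ξ, |g ξ| ≤ M) →
      ∀ (x : EuclideanSpace ℝ (Fin N)) (R y : ℝ), 0 < R → 0 < y →
        IntegrableOn
          (fun ξ : EuclideanSpace ℝ (Fin N) =>
            (g ξ - g x) *
              ((dist x ξ ^ 2 + y ^ 2) ^ (-((N : ℝ) + σ) / 2)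
                - dist x ξ ^ (-((N : ℝ) + σ))))
          {ξ : EuclideanSpace ℝ (Fin N) | R ≤ dist ξ x} volume
        ∧ |∫ ξ in {ξ : EuclideanSpace ℝ (Fin N) | R ≤ dist ξ x},
            (g ξ - g x) *
              ((dist x ξ ^ 2 + y ^ 2) ^ (-((N : ℝ) + σ) / 2)
                - dist x ξ ^ (-((N : ℝ) + σ)))|
          ≤ C * M * y ^ 2 / R ^ (σ + 2) := by
  obtain ⟨hσ0, -⟩ := hσ
  have : Nonempty (Fin N) := Fin.pos_iff_nonempty.mp hN
  have hV : 0 < volume.real (ball (0 : EuclideanSpace ℝ (Fin N)) 1) :=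
    ENNReal.toReal_pos (measure_ball_pos _ _ one_pos).ne' measure_ball_lt_top.ne
  refine ⟨(N + σ) * (N * volume.real (ball (0 : EuclideanSpace ℝ (Fin N)) 1)) / (σ + 2),
    by positivity, ?_⟩
  intro g hg M hM x R y hR _
  have hbound : ∀ ξ, R ≤ dist ξ x →
      |(g ξ - g x) * ((dist x ξ ^ 2 + y ^ 2) ^ (-((N : ℝ) + σ) / 2) - dist x ξ ^ (-((N : ℝ) + σ)))|
        ≤ M * (N + σ) * y ^ 2 * ‖ξ - x‖ ^ (-((N + σ) + 2)) := fun ξ hξ ↦ by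
    rw [← dist_eq_norm, dist_comm]
    exact abs_sub_mul_kernel_sub_le y (hM ξ) (hM x) (by positivity) (hR.trans_le hξ)
  obtain ⟨hint, habs⟩ := integrableOn_and_abs_setIntegral_le_of_abs_le_norm_sub_rpow volume x
    (by fun_prop) hR (by rw [finrank_euclideanSpace_fin]; linarith) hbound
  refine ⟨hint, habs.trans_eq ?_⟩
  rw [finrank_euclideanSpace_fin, show (N : ℝ) + -((N + σ) + 2) = -(σ + 2) by ring,
    Real.rpow_neg hR.le]
  field_simp
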